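/- arXiv:2205.04825 — 2 statements merged into one kernel-verified Lean document; each statement's English description precedes it below -/
import Mathlib

section
/- Let G be a connected bipartite graph with bipartition (X,Y) and n ≥ 2. Define the graph G̃_n with vertex set (X ∪ Y) × {1,…,n}, where for i = 1,…,n, H_i is a copy of G on bipartition (X_i, Y_i) and H_i' is a copy of G on bipartition (X_{i+1}, Y_i) (indices of X taken modulo n), and G̃_n = ⋃_{i=1}^n (H_i ∪ H_i'). Then κ(G̃_n) = min{n·κ(G), 2·δ(G)}. -/
open SimpleGraph

universe u v

variable {α : Type u} {β : Type v}

/-- Direct (tensor) product of two simple graphs. -/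
def SimpleGraph.tensorProd (G : SimpleGraph α) (H : SimpleGraph β) :
    SimpleGraph (α × β) where
  Adj x y := G.Adj x.1 y.1 ∧ H.Adj x.2 y.2
  symm := ⟨fun x y h => ⟨h.1.symm, h.2.symm⟩⟩
  loopless := ⟨fun x h => G.loopless.irrefl x.1 h.1⟩

/-- Direct (tensor) product of a family of simple graphs. -/
def SimpleGraph.piTensorProd {ι : Type*} {V : ι → Type*}
    (G : ∀ i, SimpleGraph (V i)) : SimpleGraph (∀ i, V i) where
  Adj f g := f ≠ g ∧ ∀ i, (G i).Adj (f i) (g i)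
  symm := ⟨fun f g h => ⟨h.1.symm, fun i => (h.2 i).symm⟩⟩
  loopless := ⟨fun f h => h.1 rfl⟩

/-- `S` is a vertex cut of `G`: deleting `S` leaves a disconnected graph. -/
def SimpleGraph.IsVertexCut (G : SimpleGraph α) (S : Set α) : Prop :=
  ¬ (G.induce Sᶜ).Connected

/-- Vertex connectivity: minimum size of a set `S` such that `G - S` is
disconnected or has at most one vertex. -/
noncomputable def SimpleGraph.vConn (G : SimpleGraph α) : ℕ :=
  sInf {n | ∃ S : Set α, S.ncard = n ∧
    (G.IsVertexCut S ∨ Nat.card α ≤ n + 1)}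

/-- Minimum degree (via neighbor set cardinalities). -/
noncomputable def SimpleGraph.minDeg (G : SimpleGraph α) : ℕ :=
  sInf {d | ∃ v, (G.neighborSet v).ncard = d}

/-- A minimum vertex cut. -/
def SimpleGraph.IsMinVertexCut (G : SimpleGraph α) (S : Set α) : Prop :=
  G.IsVertexCut S ∧ S.ncard = G.vConn

/-- `G` is super connected: every minimum vertex cut is the neighborhood of a
vertex of minimum degree. -/
def SimpleGraph.SuperConnected (G : SimpleGraph α) : Prop :=
  ∀ S : Set α, G.IsMinVertexCut S →
    ∃ v, (G.neighborSet v).ncard = G.minDeg ∧ S = G.neighborSet v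

/-- `(X, Y)` is a bipartition of `G`. -/
def SimpleGraph.IsBipartition (G : SimpleGraph α) (X Y : Set α) : Prop :=
  Disjoint X Y ∧ X ∪ Y = Set.univ ∧
    ∀ u v, G.Adj u v → (u ∈ X ∧ v ∈ Y) ∨ (u ∈ Y ∧ v ∈ X)

/-- The graph `G̃ₙ`: vertex set `α × ZMod n`, with for each `i` a copy `Hᵢ`
of `G` on `(Xᵢ, Yᵢ)` and a copy `Hᵢ'` of `G` on `(Xᵢ₊₁, Yᵢ)`. -/
def tildeG (G : SimpleGraph α) (X Y : Set α) (n : ℕ) :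
    SimpleGraph (α × ZMod n) where
  Adj a b := G.Adj a.1 b.1 ∧
    ((a.1 ∈ X ∧ b.1 ∈ Y ∧ (a.2 = b.2 ∨ a.2 = b.2 + 1)) ∨
     (a.1 ∈ Y ∧ b.1 ∈ X ∧ (b.2 = a.2 ∨ b.2 = a.2 + 1)))
  symm := ⟨fun a b h => ⟨h.1.symm, by tauto⟩⟩
  loopless := ⟨fun a h => G.loopless.irrefl a.1 h.1⟩

/-
Order the 2n parts of G̃ₙ cyclically as X₀, Y₀, X₁, Y₁, …, Xₙ₋₁, Yₙ₋₁: every vertex has a copy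
of its whole G-neighbourhood in each of the two parts next to its own. The upper bounds come from
the cut S₀ × ℤ/n for a minimum cut S₀ of G and from the neighbourhood of a vertex of minimum
degree. For the lower bound let S be a cut with |S| < n κ(G). Some column α × {i} meets S in
fewer than κ(G) vertices, so its survivors lie in a single component, and the survivors B outside
that component avoid the two consecutive parts Xᵢ, Yᵢ. Walking around the cycle of parts from a
part met by B in both directions gives two distinct parts avoided by B but next to a part met
by B; each contains inside S a full G-neighbourhood, so |S| ≥ 2δ(G).
-/

namespace ZMod

theorem exists_two_boundary_points {M : ℕ} [NeZero M] {Q : Set (ZMod M)} {a c : ZMod M}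
    (ha : a ∈ Q) (hc : c ∉ Q) (hc' : c + 1 ∉ Q) :
    ∃ j₁ j₂, j₁ ≠ j₂ ∧ j₁ ∉ Q ∧ j₁ - 1 ∈ Q ∧ j₂ ∉ Q ∧ j₂ + 1 ∈ Q := by
  classical
  -- `j₁` and `j₂` are the first and the last point outside `Q` met when walking once around the
  -- cycle from `a`.
  set K := (Finset.range M).filter fun k : ℕ => a + k ∉ Q
  have hmemK {k : ℕ} (hk : k < M) (hQ : a + k ∉ Q) : k ∈ K := by simp [K, hk, hQ]
  set t := (c - a).val
  have ht : a + (t : ZMod M) = c := by simp [t]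
  have ht₁ : t + 1 < M := by
    refine lt_of_le_of_ne (ZMod.val_lt _) fun h => ?_
    have : a + ((t + 1 : ℕ) : ZMod M) = a := by simp [h]
    push_cast at this
    rw [← add_assoc, ht] at this
    exact hc' (this ▸ ha)
  have htK : t ∈ K := hmemK (by omega) (ht ▸ hc)
  have htK' : t + 1 ∈ K := hmemK ht₁ (by push_cast; rwa [← add_assoc, ht])
  have hK : K.Nonempty := ⟨t, htK⟩
  have hlt : K.min' hK < K.max' hK :=
    (K.min'_le t htK).trans_lt ((Nat.lt_succ_self t).trans_le (K.le_max' _ htK'))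
  have hmax : K.max' hK < M := (Finset.mem_filter.1 (K.max'_mem hK)).1 |> Finset.mem_range.1
  refine ⟨a + K.min' hK, a + K.max' hK, fun h => ?_, (Finset.mem_filter.1 (K.min'_mem hK)).2,
    ?_, (Finset.mem_filter.1 (K.max'_mem hK)).2, ?_⟩
  · have := congrArg ZMod.val (add_left_cancel h)
    rw [ZMod.val_cast_of_lt (hlt.trans hmax), ZMod.val_cast_of_lt hmax] at this
    omega
  · have hpos : K.min' hK ≠ 0 := fun h0 =>
      (Finset.mem_filter.1 (K.min'_mem hK)).2 (by simpa [h0] using ha)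
    by_contra hQ
    have := K.min'_le _ (hmemK (k := K.min' hK - 1) (by omega) (by
      rwa [Nat.cast_sub (Nat.one_le_iff_ne_zero.2 hpos), Nat.cast_one, ← add_sub_assoc]))
    omega
  · by_contra hQ
    rcases (show K.max' hK + 1 ≤ M from hmax).lt_or_eq with h | h
    · have := K.le_max' _ (hmemK (k := K.max' hK + 1) h (by push_cast; rwa [← add_assoc]))
      omega
    · have : ((K.max' hK + 1 : ℕ) : ZMod M) = 0 := by rw [h, ZMod.natCast_self]
      push_cast at this
      exact hQ (by rwa [add_assoc, this, add_zero])

end ZMod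

namespace Set

lemma exists_ncard_fiber_lt_of_ncard_lt_mul [Finite α] {n : ℕ} [NeZero n]
    {S : Set (α × ZMod n)} {k : ℕ}
    (h : S.ncard < n * k) : ∃ i : ZMod n, {x | (x, i) ∈ S}.ncard < k := by
  classical
  have := Fintype.ofFinite α
  obtain ⟨i, -, hi⟩ := Finset.exists_card_fiber_lt_of_card_lt_mul (f := Prod.snd)
    (s := S.toFinset) (t := Finset.univ)
    (by rwa [Finset.card_univ, ZMod.card, ← ncard_eq_toFinset_card'])
  refine ⟨i, lt_of_eq_of_lt ?_ hi⟩
  rw [← ncard_image_of_injective _ (Prod.mk_left_injective i), ← ncard_coe_finset]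
  congr 1
  ext ⟨x, j⟩
  simp only [mem_image, mem_ofPred_eq, Prod.mk.injEq, Finset.coe_filter, mem_toFinset]
  constructor
  · rintro ⟨x, hx, rfl, rfl⟩
    exact ⟨hx, rfl⟩
  · rintro ⟨hx, rfl⟩
    exact ⟨x, hx, rfl, rfl⟩

end Set

namespace SimpleGraph

section VertexConnectivity

variable {V W : Type*} (G : SimpleGraph V)

lemma vConn_le_ncard_of_isVertexCut {S : Set V} (h : G.IsVertexCut S) : G.vConn ≤ S.ncard :=
  Nat.sInf_le ⟨S, rfl, .inl h⟩

lemma vConn_le_ncard_of_card_le {S : Set V} (h : Nat.card V ≤ S.ncard + 1) :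
    G.vConn ≤ S.ncard :=
  Nat.sInf_le ⟨S, rfl, .inr h⟩

lemma vConn_eq_zero_of_card_le_one (h : Nat.card V ≤ 1) : G.vConn = 0 :=
  Nat.le_zero.1 <| by simpa using G.vConn_le_ncard_of_card_le (S := ∅) (by simpa using h)

lemma exists_ncard_eq_vConn :
    ∃ S : Set V, S.ncard = G.vConn ∧ (G.IsVertexCut S ∨ Nat.card V ≤ G.vConn + 1) :=
  Nat.sInf_mem (s := {n | ∃ S : Set V, S.ncard = n ∧ (G.IsVertexCut S ∨ Nat.card V ≤ n + 1)})
    ⟨_, Set.univ, rfl, .inr (by simp)⟩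

lemma le_vConn {k : ℕ} (hcut : ∀ S, G.IsVertexCut S → k ≤ S.ncard) (hk : k + 1 ≤ Nat.card V) :
    k ≤ G.vConn := by
  obtain ⟨S, hS, hcut' | hcard⟩ := G.exists_ncard_eq_vConn
  · exact hS ▸ hcut S hcut'
  · omega

lemma vConn_add_one_le_card [Finite V] [Nonempty V] : G.vConn + 1 ≤ Nat.card V := by
  obtain ⟨v⟩ := ‹Nonempty V›
  have h := Set.ncard_sdiff_singleton_add_one (Set.mem_univ v) (Set.toFinite _)
  rw [Set.ncard_univ] at h
  have := G.vConn_le_ncard_of_card_le (S := Set.univ \ {v}) h.ge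
  omega

lemma connected_induce_compl_of_ncard_lt_vConn {T : Set V} (h : T.ncard < G.vConn) :
    (G.induce Tᶜ).Connected := by
  by_contra hT
  exact (G.vConn_le_ncard_of_isVertexCut hT).not_gt h

lemma minDeg_le_ncard_neighborSet (v : V) : G.minDeg ≤ (G.neighborSet v).ncard :=
  Nat.sInf_le ⟨v, rfl⟩

lemma exists_ncard_neighborSet_eq_minDeg [Nonempty V] :
    ∃ v, (G.neighborSet v).ncard = G.minDeg :=
  Nat.sInf_mem (s := {d | ∃ v, (G.neighborSet v).ncard = d}) ⟨_, Classical.arbitrary V, rfl⟩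

lemma vConn_le_ncard_neighborSet (v : V) : G.vConn ≤ (G.neighborSet v).ncard := by
  by_cases h : ∃ w ∉ G.neighborSet v, w ≠ v
  · obtain ⟨w, hw, hwv⟩ := h
    refine G.vConn_le_ncard_of_isVertexCut fun hconn => ?_
    obtain ⟨p⟩ := hconn.preconnected ⟨v, G.notMem_neighborSet_self⟩ ⟨w, hw⟩
    exact p.snd.2 (p.adj_snd (p.not_nil_of_ne fun h => hwv (congrArg Subtype.val h).symm))
  · push Not at h
    refine G.vConn_le_ncard_of_card_le ?_
    have : Set.univ = G.neighborSet v ∪ {v} := by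
      ext w; by_cases hw : w ∈ G.neighborSet v <;> simp [hw, h w]
    rw [← Set.ncard_univ, this]
    exact (Set.ncard_union_le _ _).trans (by simp)

lemma minDeg_le_vConn_of_card_le [Finite V] [Nonempty V] (h : Nat.card V ≤ G.vConn + 1) :
    G.minDeg ≤ G.vConn := by
  obtain ⟨v⟩ := ‹Nonempty V›
  have hN : (G.neighborSet v).ncard + 1 ≤ Nat.card V := by
    rw [← Set.ncard_univ, ← Set.ncard_sdiff_singleton_add_one (Set.mem_univ v)]
    exact Nat.add_le_add_right (Set.ncard_le_ncard
      (Set.subset_sdiff_singleton (Set.subset_univ _) G.notMem_neighborSet_self)) 1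
  have := G.minDeg_le_ncard_neighborSet v
  omega

variable {G} in
lemma IsVertexCut.preimage {H : SimpleGraph W} (φ : H →g G) (hφ : Function.Surjective φ)
    {S : Set V} (h : G.IsVertexCut S) : H.IsVertexCut (φ ⁻¹' S) := fun hconn =>
  h <| hconn.map (⟨fun p => ⟨φ p.1, p.2⟩, fun hpq => φ.map_adj hpq⟩ :
      H.induce (φ ⁻¹' S)ᶜ →g G.induce Sᶜ) fun v => by
    obtain ⟨p, hp⟩ := hφ v
    exact ⟨⟨p, show φ p ∉ S from hp ▸ v.2⟩, Subtype.ext hp⟩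

end VertexConnectivity

section OverCycle

variable {V : Type*} [Finite V] {H : SimpleGraph V} {M : ℕ} [NeZero M]

theorem two_mul_le_ncard_of_separated_over_cycle (f : V → ZMod M) {d : ℕ}
    (hsucc : ∀ u, d ≤ (H.neighborSet u ∩ f ⁻¹' {f u + 1}).ncard)
    (hpred : ∀ u, d ≤ (H.neighborSet u ∩ f ⁻¹' {f u - 1}).ncard)
    {S B : Set V} (hB : ∀ u ∈ B, ∀ v, H.Adj u v → v ∉ S → v ∈ B) (hBne : B.Nonempty)
    {c : ZMod M} (hc : ∀ p ∈ B, f p ≠ c ∧ f p ≠ c + 1) : 2 * d ≤ S.ncard := by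
  obtain ⟨w, hw⟩ := hBne
  have hfiber {u} (hu : u ∈ B) {j} (hj : j ∉ f '' B) :
      H.neighborSet u ∩ f ⁻¹' {j} ⊆ S ∩ f ⁻¹' {j} := fun v ⟨huv, hvj⟩ =>
    ⟨by_contra fun hvS => hj ⟨v, hB u hu v huv hvS, hvj⟩, hvj⟩
  obtain ⟨j₁, j₂, hne, hj₁, ⟨u₁, hu₁, hfu₁⟩, hj₂, ⟨u₂, hu₂, hfu₂⟩⟩ :=
    ZMod.exists_two_boundary_points (Set.mem_image_of_mem f hw)
      (fun ⟨p, hp, hpc⟩ => (hc p hp).1 hpc) (fun ⟨p, hp, hpc⟩ => (hc p hp).2 hpc)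
  have h₁ : d ≤ (S ∩ f ⁻¹' {j₁}).ncard :=
    (hsucc u₁).trans <| Set.ncard_le_ncard <| by simpa [hfu₁] using hfiber hu₁ hj₁
  have h₂ : d ≤ (S ∩ f ⁻¹' {j₂}).ncard :=
    (hpred u₂).trans <| Set.ncard_le_ncard <| by simpa [hfu₂] using hfiber hu₂ hj₂
  have hdisj : Disjoint (S ∩ f ⁻¹' {j₁}) (S ∩ f ⁻¹' {j₂}) :=
    Set.disjoint_of_subset Set.inter_subset_right Set.inter_subset_right
      ((Set.disjoint_singleton.2 hne).preimage f)
  calc 2 * d ≤ (S ∩ f ⁻¹' {j₁}).ncard + (S ∩ f ⁻¹' {j₂}).ncard := by omega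
    _ = (S ∩ f ⁻¹' {j₁} ∪ S ∩ f ⁻¹' {j₂}).ncard := (Set.ncard_union_eq hdisj).symm
    _ ≤ S.ncard :=
      Set.ncard_le_ncard (Set.union_subset Set.inter_subset_left Set.inter_subset_left)

end OverCycle

variable {G : SimpleGraph α} {X Y : Set α} {n : ℕ}

lemma IsBipartition.mem_iff_notMem_of_adj (hbip : G.IsBipartition X Y) {x y : α}
    (h : G.Adj x y) : x ∈ X ↔ y ∉ X := by
  rcases hbip.2.2 x y h with ⟨hx, hy⟩ | ⟨hx, hy⟩
  · exact iff_of_true hx fun hyX => hbip.1.notMem_of_mem_left hyX hy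
  · exact iff_of_false (hbip.1.notMem_of_mem_right hx) (not_not.2 hy)

lemma IsBipartition.mem_right_iff (hbip : G.IsBipartition X Y) {y : α} : y ∈ Y ↔ y ∉ X := by
  refine ⟨fun hy hx => hbip.1.notMem_of_mem_left hx hy, fun hx => ?_⟩
  have := hbip.2.1 ▸ Set.mem_univ y
  exact this.resolve_left hx

lemma tildeG_adj_iff (hbip : G.IsBipartition X Y) {x y : α} {i j : ZMod n} :
    (tildeG G X Y n).Adj (x, i) (y, j) ↔
      G.Adj x y ∧ (x ∈ X ∧ (i = j ∨ i = j + 1) ∨ x ∉ X ∧ (j = i ∨ j = i + 1)) := by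
  refine and_congr_right fun h => ?_
  have hxy := hbip.mem_iff_notMem_of_adj h
  simp only [hbip.mem_right_iff] at hxy ⊢
  tauto

lemma tildeG_adj_of_adj (hbip : G.IsBipartition X Y) {x y : α} (h : G.Adj x y) (i : ZMod n) :
    (tildeG G X Y n).Adj (x, i) (y, i) := by
  by_cases hx : x ∈ X <;> simp [tildeG_adj_iff hbip, h, hx]

lemma exists_neighborSet_tildeG_subset (hbip : G.IsBipartition X Y) (p : α × ZMod n) :
    ∃ i', (tildeG G X Y n).neighborSet p ⊆ G.neighborSet p.1 ×ˢ {p.2, i'} := by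
  obtain ⟨x, i⟩ := p
  by_cases hx : x ∈ X
  · refine ⟨i - 1, fun ⟨y, j⟩ h => ?_⟩
    rw [mem_neighborSet, tildeG_adj_iff hbip] at h
    obtain ⟨hxy, ⟨-, rfl | rfl⟩ | ⟨hx', -⟩⟩ := h
    · exact ⟨hxy, .inl rfl⟩
    · exact ⟨hxy, .inr (by simp)⟩
    · exact (hx' hx).elim
  · refine ⟨i + 1, fun ⟨y, j⟩ h => ?_⟩
    rw [mem_neighborSet, tildeG_adj_iff hbip] at h
    obtain ⟨hxy, ⟨hx', -⟩ | ⟨-, rfl | rfl⟩⟩ := h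
    · exact (hx hx').elim
    · exact ⟨hxy, .inl rfl⟩
    · exact ⟨hxy, .inr rfl⟩

lemma ncard_neighborSet_tildeG_le [Finite α] [NeZero n] (hbip : G.IsBipartition X Y)
    (p : α × ZMod n) :
    ((tildeG G X Y n).neighborSet p).ncard ≤ 2 * (G.neighborSet p.1).ncard := by
  obtain ⟨i', hsub⟩ := exists_neighborSet_tildeG_subset hbip p
  calc _ ≤ (G.neighborSet p.1 ×ˢ {p.2, i'}).ncard := Set.ncard_le_ncard hsub
    _ ≤ (G.neighborSet p.1).ncard * 2 := by
      rw [Set.ncard_prod]; exact Nat.mul_le_mul_left _ ((Set.ncard_insert_le _ _).trans (by simp))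
    _ = _ := mul_comm _ _

lemma vConn_tildeG_le_two_mul_minDeg [Finite α] [Nonempty α] [NeZero n]
    (hbip : G.IsBipartition X Y) : (tildeG G X Y n).vConn ≤ 2 * G.minDeg := by
  obtain ⟨v, hv⟩ := G.exists_ncard_neighborSet_eq_minDeg
  calc _ ≤ _ := vConn_le_ncard_neighborSet _ (v, 0)
    _ ≤ _ := ncard_neighborSet_tildeG_le hbip _
    _ = _ := by rw [hv]

lemma vConn_tildeG_le_mul [Finite α] [Nonempty α] (hbip : G.IsBipartition X Y) (hn : 2 ≤ n) :
    (tildeG G X Y n).vConn ≤ n * G.vConn := by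
  have : NeZero n := ⟨by omega⟩
  obtain ⟨S, hS, hcut | hcard⟩ := G.exists_ncard_eq_vConn
  · calc (tildeG G X Y n).vConn ≤ (Prod.fst ⁻¹' S : Set (α × ZMod n)).ncard :=
          vConn_le_ncard_of_isVertexCut _ <| hcut.preimage
            (⟨Prod.fst, fun h => h.1⟩ : tildeG G X Y n →g G) Prod.fst_surjective
      _ = n * G.vConn := by
        rw [← Set.prod_univ, Set.ncard_prod, Set.ncard_univ, Nat.card_zmod, hS, mul_comm]
  · calc _ ≤ 2 * G.minDeg := vConn_tildeG_le_two_mul_minDeg hbip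
      _ ≤ 2 * G.vConn := Nat.mul_le_mul_left _ (G.minDeg_le_vConn_of_card_le hcard)
      _ ≤ n * G.vConn := Nat.mul_le_mul_right _ hn

-- Numbers the parts of `tildeG G X Y n` in their cyclic order `X₀, Y₀, X₁, Y₁, …`.
open Classical in
noncomputable def tildeSlot (X : Set α) (n : ℕ) (p : α × ZMod n) : ZMod (2 * n) :=
  (2 * p.2.val + if p.1 ∈ X then 0 else 1 : ℕ)

lemma tildeSlot_of_mem {x : α} (hx : x ∈ X) (i : ZMod n) :
    tildeSlot X n (x, i) = ((2 * i.val : ℕ) : ZMod (2 * n)) := by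
  simp [tildeSlot, hx]

lemma tildeSlot_of_notMem {x : α} (hx : x ∉ X) (i : ZMod n) :
    tildeSlot X n (x, i) = ((2 * i.val : ℕ) : ZMod (2 * n)) + 1 := by
  simp [tildeSlot, hx]

lemma natCast_two_mul_val_add_one [NeZero n] (i : ZMod n) :
    ((2 * (i + 1).val : ℕ) : ZMod (2 * n)) = ((2 * i.val : ℕ) : ZMod (2 * n)) + 2 := by
  have : i + 1 = ((i.val + 1 : ℕ) : ZMod n) := by simp
  rw [this, ZMod.val_natCast, ← Nat.mul_mod_mul_left, ZMod.natCast_mod]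
  push_cast
  ring

lemma snd_eq_of_tildeSlot_eq [NeZero n] {p : α × ZMod n} {i : ZMod n} {e : ℕ} (he : e ≤ 1)
    (h : tildeSlot X n p = ((2 * i.val + e : ℕ) : ZMod (2 * n))) : p.2 = i := by
  have hp := p.2.val_lt
  have hi := i.val_lt
  have hval := congrArg ZMod.val h
  unfold tildeSlot at hval
  split_ifs at hval <;>
  · rw [ZMod.val_cast_of_lt (by omega), ZMod.val_cast_of_lt (by omega)] at hval
    exact ZMod.val_injective _ (by omega)

lemma exists_tildeG_adj_tildeSlot_add_one [NeZero n] (hbip : G.IsBipartition X Y)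
    (p : α × ZMod n) : ∃ i', ∀ y, G.Adj p.1 y →
      (tildeG G X Y n).Adj p (y, i') ∧ tildeSlot X n (y, i') = tildeSlot X n p + 1 := by
  obtain ⟨x, i⟩ := p
  by_cases hx : x ∈ X
  · refine ⟨i, fun y hxy => ⟨by simp [tildeG_adj_iff hbip, hxy, hx], ?_⟩⟩
    rw [tildeSlot_of_notMem ((hbip.mem_iff_notMem_of_adj hxy).1 hx), tildeSlot_of_mem hx]
  · refine ⟨i + 1, fun y hxy => ⟨by simp [tildeG_adj_iff hbip, hxy, hx], ?_⟩⟩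
    rw [tildeSlot_of_mem (not_not.1 <| mt (hbip.mem_iff_notMem_of_adj hxy).2 hx),
      tildeSlot_of_notMem hx, natCast_two_mul_val_add_one]
    ring

lemma exists_tildeG_adj_tildeSlot_sub_one [NeZero n] (hbip : G.IsBipartition X Y)
    (p : α × ZMod n) : ∃ i', ∀ y, G.Adj p.1 y →
      (tildeG G X Y n).Adj p (y, i') ∧ tildeSlot X n (y, i') = tildeSlot X n p - 1 := by
  obtain ⟨x, i⟩ := p
  by_cases hx : x ∈ X
  · refine ⟨i - 1, fun y hxy => ⟨by simp [tildeG_adj_iff hbip, hxy, hx], ?_⟩⟩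
    have := natCast_two_mul_val_add_one (i - 1)
    rw [sub_add_cancel] at this
    rw [tildeSlot_of_notMem ((hbip.mem_iff_notMem_of_adj hxy).1 hx), tildeSlot_of_mem hx, this]
    ring
  · refine ⟨i, fun y hxy => ⟨by simp [tildeG_adj_iff hbip, hxy, hx], ?_⟩⟩
    rw [tildeSlot_of_mem (not_not.1 <| mt (hbip.mem_iff_notMem_of_adj hxy).2 hx),
      tildeSlot_of_notMem hx, add_sub_cancel_right]

lemma minDeg_le_ncard_neighborSet_tildeG_inter [Finite α] [NeZero n] {p : α × ZMod n}
    {s : ZMod (2 * n)}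
    (h : ∃ i', ∀ y, G.Adj p.1 y → (tildeG G X Y n).Adj p (y, i') ∧ tildeSlot X n (y, i') = s) :
    G.minDeg ≤ ((tildeG G X Y n).neighborSet p ∩ tildeSlot X n ⁻¹' {s}).ncard := by
  obtain ⟨i', hi'⟩ := h
  calc G.minDeg ≤ (G.neighborSet p.1).ncard := G.minDeg_le_ncard_neighborSet _
    _ = ((fun y => (y, i')) '' G.neighborSet p.1).ncard :=
      (Set.ncard_image_of_injective _ (Prod.mk_left_injective i')).symm
    _ ≤ _ := Set.ncard_le_ncard (by rintro _ ⟨y, hy, rfl⟩; exact hi' y hy)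

lemma two_mul_minDeg_le_ncard_of_isVertexCut_tildeG [Finite α] [NeZero n]
    (hbip : G.IsBipartition X Y) {S : Set (α × ZMod n)} (hcut : (tildeG G X Y n).IsVertexCut S)
    (hS : S.ncard < n * G.vConn) : 2 * G.minDeg ≤ S.ncard := by
  obtain ⟨i, hi⟩ := Set.exists_ncard_fiber_lt_of_ncard_lt_mul hS
  have hT := G.connected_induce_compl_of_ncard_lt_vConn hi
  let φ : G.induce {x | (x, i) ∈ S}ᶜ →g (tildeG G X Y n).induce Sᶜ :=
    ⟨fun x => ⟨(x.1, i), x.2⟩, fun h => tildeG_adj_of_adj hbip h i⟩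
  obtain ⟨x₀⟩ := hT.nonempty
  have hcolumn (p : α × ZMod n) (hp : p ∉ S) (hpi : p.2 = i) :
      ((tildeG G X Y n).induce Sᶜ).Reachable (φ x₀) ⟨p, hp⟩ := by
    obtain ⟨x, j⟩ := p
    subst hpi
    exact (hT x₀ ⟨x, hp⟩).map φ
  obtain ⟨w, hw⟩ : ∃ w, ¬ ((tildeG G X Y n).induce Sᶜ).Reachable (φ x₀) w := by
    by_contra! h
    exact hcut ((connected_iff_exists_forall_reachable _).2 ⟨_, h⟩)
  refine two_mul_le_ncard_of_separated_over_cycle (tildeSlot X n)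
    (fun p => minDeg_le_ncard_neighborSet_tildeG_inter
      (exists_tildeG_adj_tildeSlot_add_one hbip p))
    (fun p => minDeg_le_ncard_neighborSet_tildeG_inter
      (exists_tildeG_adj_tildeSlot_sub_one hbip p))
    (B := {p | ∃ hp : p ∉ S, ¬ ((tildeG G X Y n).induce Sᶜ).Reachable (φ x₀) ⟨p, hp⟩})
    ?_ ⟨w, w.2, hw⟩ (c := ((2 * i.val : ℕ) : ZMod (2 * n))) ?_
  · rintro u ⟨hu, hur⟩ v huv hv
    have hvu : ((tildeG G X Y n).induce Sᶜ).Adj ⟨v, hv⟩ ⟨u, hu⟩ := huv.symm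
    exact ⟨hv, fun hv' => hur (hv'.trans hvu.reachable)⟩
  · rintro p ⟨hp, hpr⟩
    exact ⟨fun h => hpr (hcolumn p hp (snd_eq_of_tildeSlot_eq zero_le_one h)),
      fun h => hpr (hcolumn p hp (snd_eq_of_tildeSlot_eq (e := 1) le_rfl (by simpa using h)))⟩

lemma min_le_ncard_of_isVertexCut_tildeG [Finite α] [NeZero n] (hbip : G.IsBipartition X Y)
    {S : Set (α × ZMod n)} (hcut : (tildeG G X Y n).IsVertexCut S) :
    min (n * G.vConn) (2 * G.minDeg) ≤ S.ncard := by
  rcases lt_or_ge S.ncard (n * G.vConn) with h | h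
  · exact (min_le_right _ _).trans (two_mul_minDeg_le_ncard_of_isVertexCut_tildeG hbip hcut h)
  · exact (min_le_left _ _).trans h

end SimpleGraph

theorem stmt_5_general (G : SimpleGraph α) (X Y : Set α)
    (hbip : G.IsBipartition X Y) (n : ℕ) (hn : 2 ≤ n) :
    (tildeG G X Y n).vConn = min (n * G.vConn) (2 * G.minDeg) := by
  have : NeZero n := ⟨by omega⟩
  rcases (Nat.card α).eq_zero_or_pos with h0 | hpos
  -- `Nat.card α = 0` also covers infinite `α`.
  · rw [G.vConn_eq_zero_of_card_le_one (by omega),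
      vConn_eq_zero_of_card_le_one _ (by simp [Nat.card_prod, h0])]
    simp
  have : Finite α := Nat.finite_of_card_ne_zero hpos.ne'
  have : Nonempty α := (Nat.card_pos_iff.1 hpos).1
  refine le_antisymm (le_min (vConn_tildeG_le_mul hbip hn) (vConn_tildeG_le_two_mul_minDeg hbip))
    (le_vConn _ (fun S hS => min_le_ncard_of_isVertexCut_tildeG hbip hS) ?_)
  have := G.vConn_add_one_le_card
  calc min (n * G.vConn) (2 * G.minDeg) + 1 ≤ n * G.vConn + n := by
        have := min_le_left (n * G.vConn) (2 * G.minDeg); omega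
    _ = (G.vConn + 1) * n := by ring
    _ ≤ Nat.card α * n := Nat.mul_le_mul_right _ this
    _ = Nat.card (α × ZMod n) := by rw [Nat.card_prod, Nat.card_zmod]

/-- κ(G̃ₙ) = min{n·κ(G), 2·δ(G)} for a connected bipartite graph G and n ≥ 2. -/
theorem stmt_5 (G : SimpleGraph α) (X Y : Set α)
    (hGc : G.Connected) (hbip : G.IsBipartition X Y) (n : ℕ) (hn : 2 ≤ n) :
    (tildeG G X Y n).vConn = min (n * G.vConn) (2 * G.minDeg) :=
  stmt_5_general G X Y hbip n hn
end

section
/- If H is the direct product of k ≥ 1 odd cycles, then κ(H × K_2) = 2^k. -/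
open SimpleGraph

universe u v

variable {α : Type u} {β : Type v}

/-!
`H × K₂` is the Cayley graph of `A = ∏ᵢ ℤ/lᵢ × ℤ/2` with the symmetric connection set
`T = {±1}ᵏ × {1}`. Every vertex cut contains a boundary `(C + T) \ C` of a set `C` that leaves
some vertex outside `C ∪ (C + T)`, and every such boundary is a vertex cut; the neighbourhood `T`
of `0` is such a boundary, of size `2ᵏ`.

For the lower bound we follow Hamidoune's isoperimetric method. Among the sets of minimal boundary
(fragments) take one of minimal size (an atom). By submodularity of `C ↦ |(C + T) \ C|`, an atom
meeting a fragment is contained in it; applied to the translates of an atom through `0`, this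
makes that atom a subgroup `Q`. As the `lᵢ` are odd, `T` generates `A`, so `T ⊄ Q`; then
comparing `T` and a translate `s + Q`, `s ∈ T \ Q`, with the even part of `Q` (last coordinate
`0`), which is at most half of `Q`, gives `|(Q + T) \ Q| ≥ |T|`.
-/

open Finset Pointwise

namespace SimpleGraph

variable {V : Type*} (G : SimpleGraph V)

def SeparatedBy (S C : Set V) : Prop := ∀ x ∈ C, ∀ y, G.Adj x y → y ∈ C ∨ y ∈ S

variable {G} {S C : Set V}

lemma SeparatedBy.mem_of_reachable (hC : G.SeparatedBy S C) {u v : ↥Sᶜ}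
    (huv : (G.induce Sᶜ).Reachable u v) (hu : (u : V) ∈ C) : (v : V) ∈ C := by
  obtain ⟨p⟩ := huv
  induction p with
  | nil => exact hu
  | @cons _ w _ hadj _ ih => exact ih ((hC _ hu _ (induce_adj.mp hadj)).resolve_right w.2)

theorem isVertexCut_iff : G.IsVertexCut S ↔
    S = Set.univ ∨ ∃ C, G.SeparatedBy S C ∧ (C \ S).Nonempty ∧ (Cᶜ \ S).Nonempty := by
  constructor
  · intro hS
    by_cases hS_univ : S = Set.univ
    · exact Or.inl hS_univ
    obtain ⟨u, hu⟩ := Set.nonempty_compl.mpr hS_univ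
    have : Nonempty ↥Sᶜ := ⟨⟨u, hu⟩⟩
    obtain ⟨a, b, hab⟩ : ∃ a b : ↥Sᶜ, ¬ (G.induce Sᶜ).Reachable a b := by
      by_contra! h
      exact hS ⟨h⟩
    refine Or.inr ⟨{x | ∃ hx : x ∈ Sᶜ, (G.induce Sᶜ).Reachable a ⟨x, hx⟩}, ?_,
      ⟨a, ⟨a.2, .rfl⟩, a.2⟩, ⟨b, fun ⟨_, h⟩ => hab h, b.2⟩⟩
    rintro x ⟨hx, hax⟩ y hxy
    by_cases hy : y ∈ S
    · exact Or.inr hy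
    · have hxy' : (G.induce Sᶜ).Adj ⟨x, hx⟩ ⟨y, hy⟩ := induce_adj.mpr hxy
      exact Or.inl ⟨hy, hax.trans hxy'.reachable⟩
  · rintro (rfl | ⟨C, hC, ⟨u, huC, huS⟩, ⟨w, hwC, hwS⟩⟩) hconn
    · obtain ⟨⟨x, hx⟩⟩ := hconn.nonempty
      exact hx trivial
    · exact hwC (hC.mem_of_reachable (u := ⟨u, huS⟩) (v := ⟨w, hwS⟩) (hconn.preconnected _ _) huC)

end SimpleGraph

namespace AddCayley

variable {A : Type*} [AddCommGroup A] {B : Type*} [AddGroup B] [DecidableEq B]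

lemma two_mul_card_filter_ker_le (ε : A →+ B) {H : AddSubgroup A} {Q : Finset A}
    (hQ : (Q : Set A) = H) {g : A} (hg : g ∈ Q) (hεg : ε g ≠ 0) :
    2 * #{a ∈ Q | ε a = 0} ≤ #Q := by
  have hmem : ∀ {a}, a ∈ Q ↔ a ∈ H := fun {a} => Set.ext_iff.mp hQ a
  have hshift : #{a ∈ Q | ε a = 0} ≤ #{a ∈ Q | ¬ ε a = 0} := by
    refine card_le_card_of_injOn (· + g) (fun a ha => ?_) fun a _ b _ h => add_right_cancel h
    obtain ⟨haQ, ha0⟩ := mem_filter.mp ha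
    exact mem_filter.mpr ⟨hmem.mpr (add_mem (hmem.mp haQ) (hmem.mp hg)), by simpa [ha0] using hεg⟩
  have := card_filter_add_card_filter_not (s := Q) (fun a => ε a = 0)
  omega

variable [DecidableEq A]

section Boundary

variable (T : Finset A)

def boundary (C : Finset A) : Finset A := (C + T) \ C

def closedNbhd (C : Finset A) : Finset A := C ∪ (C + T)

variable {T}

lemma closedNbhd_eq_union_boundary (C : Finset A) : closedNbhd T C = C ∪ boundary T C :=
  union_sdiff_self_eq_union.symm

lemma card_closedNbhd (C : Finset A) : #(closedNbhd T C) = #C + #(boundary T C) := by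
  rw [closedNbhd_eq_union_boundary, boundary, card_union_of_disjoint disjoint_sdiff]

lemma closedNbhd_mono {C D : Finset A} (h : C ⊆ D) : closedNbhd T C ⊆ closedNbhd T D :=
  union_subset_union h (add_subset_add_right h)

lemma closedNbhd_union (C D : Finset A) :
    closedNbhd T (C ∪ D) = closedNbhd T C ∪ closedNbhd T D := by
  rw [closedNbhd, closedNbhd, closedNbhd, union_add, union_union_union_comm]

lemma card_boundary_inter_add_card_boundary_union_le (C D : Finset A) :
    #(boundary T (C ∩ D)) + #(boundary T (C ∪ D)) ≤ #(boundary T C) + #(boundary T D) := by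
  have hnbhd : #(closedNbhd T (C ∩ D)) + #(closedNbhd T (C ∪ D))
      ≤ #(closedNbhd T C) + #(closedNbhd T D) := by
    rw [← card_inter_add_card_union (closedNbhd T C), closedNbhd_union]
    gcongr
    exact subset_inter (closedNbhd_mono inter_subset_left) (closedNbhd_mono inter_subset_right)
  simp only [card_closedNbhd] at hnbhd
  have := card_inter_add_card_union C D
  omega

lemma boundary_vadd_finset (g : A) (C : Finset A) :
    boundary T (g +ᵥ C) = g +ᵥ boundary T C := by
  rw [boundary, boundary, vadd_add_assoc, vadd_finset_sdiff]

lemma closedNbhd_vadd_finset (g : A) (C : Finset A) :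
    closedNbhd T (g +ᵥ C) = g +ᵥ closedNbhd T C := by
  rw [closedNbhd, closedNbhd, vadd_add_assoc, vadd_finset_union]

lemma boundary_compl_closedNbhd_subset [Fintype A] (hT : ∀ t ∈ T, -t ∈ T) (C : Finset A) :
    boundary T (closedNbhd T C)ᶜ ⊆ boundary T C := by
  intro a ha
  simp only [boundary, closedNbhd, mem_sdiff, mem_add, mem_compl, mem_union, not_not] at ha ⊢
  obtain ⟨⟨s, hs, t, ht, rfl⟩, hst⟩ := ha
  have hst_notMem : s + t ∉ C := fun h => hs (Or.inr ⟨s + t, h, -t, hT t ht, by abel⟩)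
  exact ⟨hst.resolve_left hst_notMem, hst_notMem⟩

lemma subset_compl_closedNbhd_compl_closedNbhd [Fintype A] (hT : ∀ t ∈ T, -t ∈ T)
    (C : Finset A) : C ⊆ (closedNbhd T (closedNbhd T C)ᶜ)ᶜ := by
  intro c hc
  rw [mem_compl, closedNbhd, mem_union, not_or]
  refine ⟨fun h => mem_compl.mp h (subset_union_left hc), fun h => ?_⟩
  obtain ⟨s, hs, t, ht, rfl⟩ := mem_add.mp h
  exact mem_compl.mp hs (mem_union_right _ (mem_add.mpr ⟨s + t, hc, -t, hT t ht, by abel⟩))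

lemma separatedBy_boundary {G : SimpleGraph A} (hadj : ∀ x y, G.Adj x y ↔ y - x ∈ T)
    (C : Finset A) : G.SeparatedBy (boundary T C) C := by
  intro x hx y hxy
  by_cases hy : y ∈ C
  · exact Or.inl hy
  · have hxy' : y ∈ C + T := mem_add.mpr ⟨x, hx, y - x, (hadj x y).mp hxy, add_sub_cancel x y⟩
    exact Or.inr (mem_sdiff.mpr ⟨hxy', hy⟩)

lemma card_inter_le_card_filter_ker (ε : A →+ B) {c : B} (hε : ∀ t ∈ T, ε t = c)
    {S Q : Finset A} {g : A} (hg : ε g = c) (hSQ : ∀ a ∈ S, a - g ∈ Q) :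
    #(S ∩ T) ≤ #{a ∈ Q | ε a = 0} := by
  refine card_le_card_of_injOn (· - g) (fun a ha => ?_) fun a _ b _ h => sub_left_injective h
  obtain ⟨haS, haT⟩ := mem_inter.mp ha
  exact mem_filter.mpr ⟨hSQ a haS, by rw [map_sub, hε a haT, hg, sub_self]⟩

/-- Both `(Q + T) \ Q ⊇ T \ Q` and `(Q + T) \ Q ⊇ (s +ᵥ Q) \ T` for `s ∈ T \ Q`; the parts
`T ∩ Q` and `(s +ᵥ Q) ∩ T` missed this way each inject into the `ε`-kernel of `Q`, which is at
most half of `Q` once `T` meets `Q`. -/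
theorem card_le_card_boundary_of_addSubgroup (ε : A →+ B) {c : B} (hc : c ≠ 0)
    (hε : ∀ t ∈ T, ε t = c) {H : AddSubgroup A} {Q : Finset A} (hQ : (Q : Set A) = H)
    (hTQ : ¬ T ⊆ Q) : #T ≤ #(boundary T Q) := by
  have hmem : ∀ {a}, a ∈ Q ↔ a ∈ H := fun {a} => Set.ext_iff.mp hQ a
  have hT_bd : T \ Q ⊆ boundary T Q := by
    refine sdiff_subset_sdiff (fun t ht => ?_) subset_rfl
    simpa using add_mem_add (hmem.mpr H.zero_mem) ht
  rcases (T ∩ Q).eq_empty_or_nonempty with hdisj | ⟨t₀, ht₀⟩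
  · calc #T = #(T \ Q) := by rw [← card_sdiff_add_card_inter T Q, hdisj, card_empty, add_zero]
      _ ≤ #(boundary T Q) := card_le_card hT_bd
  obtain ⟨ht₀T, ht₀Q⟩ := mem_inter.mp ht₀
  obtain ⟨s, hsT, hsQ⟩ := not_subset.mp hTQ
  have hshift_bd : s +ᵥ Q ⊆ boundary T Q := by
    intro a ha
    obtain ⟨q, hq, rfl⟩ := mem_vadd_finset.mp ha
    refine mem_sdiff.mpr ⟨mem_add.mpr ⟨q, hq, s, hsT, add_comm q s⟩, fun h => hsQ ?_⟩
    simpa using hmem.mpr (sub_mem (hmem.mp h) (hmem.mp hq))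
  have hbd : #(T \ Q) + #((s +ᵥ Q) \ T) ≤ #(boundary T Q) := by
    rw [← card_union_of_disjoint (disjoint_sdiff.mono_left sdiff_subset)]
    exact card_le_card (union_subset hT_bd (sdiff_subset.trans hshift_bd))
  have hT_split := card_sdiff_add_card_inter T Q
  have hshift_split := card_sdiff_add_card_inter (s +ᵥ Q) T
  rw [card_vadd_finset] at hshift_split
  have hT_ker : #(T ∩ Q) ≤ #{a ∈ Q | ε a = 0} := inter_comm Q T ▸
    card_inter_le_card_filter_ker ε hε (hε t₀ ht₀T) fun a ha =>
      hmem.mpr (sub_mem (hmem.mp ha) (hmem.mp ht₀Q))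
  have hshift_ker : #((s +ᵥ Q) ∩ T) ≤ #{a ∈ Q | ε a = 0} :=
    card_inter_le_card_filter_ker ε hε (hε s hsT) fun a ha => by
      obtain ⟨q, hq, rfl⟩ := mem_vadd_finset.mp ha
      simpa using hq
  have hker := two_mul_card_filter_ker_le ε hQ ht₀Q (hε t₀ ht₀T ▸ hc)
  omega

end Boundary

section Atom

variable [Fintype A] (T : Finset A)

def IsSeparating (C : Finset A) : Prop :=
  C.Nonempty ∧ (closedNbhd T C)ᶜ.Nonempty

def IsFragment (C : Finset A) : Prop :=
  IsSeparating T C ∧ ∀ D, IsSeparating T D → #(boundary T C) ≤ #(boundary T D)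

def IsAtom (C : Finset A) : Prop :=
  IsFragment T C ∧ ∀ D, IsFragment T D → #C ≤ #D

variable {T}

lemma IsSeparating.card_boundary_lt {C : Finset A} (hC : IsSeparating T C) :
    #(boundary T C) < Fintype.card A := by
  obtain ⟨c, hc⟩ := hC.1
  exact card_lt_univ_of_notMem fun h => (mem_sdiff.mp h).2 hc

lemma IsSeparating.vadd_finset {C : Finset A} (hC : IsSeparating T C) (g : A) :
    IsSeparating T (g +ᵥ C) := by
  have hcompl : (g +ᵥ closedNbhd T C)ᶜ = g +ᵥ (closedNbhd T C)ᶜ := by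
    ext a
    simp [← neg_vadd_mem_iff]
  rw [IsSeparating, closedNbhd_vadd_finset, hcompl, vadd_finset_nonempty, vadd_finset_nonempty]
  exact hC

lemma IsFragment.vadd_finset {C : Finset A} (hC : IsFragment T C) (g : A) :
    IsFragment T (g +ᵥ C) := by
  refine ⟨hC.1.vadd_finset g, fun D hD => ?_⟩
  rw [boundary_vadd_finset, card_vadd_finset]
  exact hC.2 D hD

lemma IsAtom.vadd_finset {C : Finset A} (hC : IsAtom T C) (g : A) : IsAtom T (g +ᵥ C) := by
  refine ⟨hC.1.vadd_finset g, fun D hD => ?_⟩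
  rw [card_vadd_finset]
  exact hC.2 D hD

lemma exists_isFragment (h : ∃ C, IsSeparating T C) : ∃ C, IsFragment T C := by
  obtain ⟨C, hC, hmin⟩ := Set.exists_min_image {C | IsSeparating T C} (fun C => #(boundary T C))
    (Set.toFinite _) h
  exact ⟨C, hC, hmin⟩

lemma exists_isAtom (h : ∃ C, IsSeparating T C) : ∃ C, IsAtom T C := by
  obtain ⟨C, hC, hmin⟩ := Set.exists_min_image {C | IsFragment T C} card
    (Set.toFinite _) (exists_isFragment h)
  exact ⟨C, hC, hmin⟩

lemma IsFragment.compl_closedNbhd (hT : ∀ t ∈ T, -t ∈ T) {F : Finset A} (hF : IsFragment T F) :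
    IsFragment T (closedNbhd T F)ᶜ := by
  have hsep : IsSeparating T (closedNbhd T F)ᶜ :=
    ⟨hF.1.2, hF.1.1.mono (subset_compl_closedNbhd_compl_closedNbhd hT F)⟩
  exact ⟨hsep, fun D hD =>
    (card_le_card (boundary_compl_closedNbhd_subset hT F)).trans (hF.2 D hD)⟩

/-- If `Q ∪ F` is not separating, its boundary is everything outside it, and that is at least
as large as the boundary of `F` because `Q` fits into the fragment `(closedNbhd T F)ᶜ`. -/
lemma card_boundary_le_card_boundary_union (hT : ∀ t ∈ T, -t ∈ T) {Q F : Finset A}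
    (hQ : IsAtom T Q) (hF : IsFragment T F) :
    #(boundary T F) ≤ #(boundary T (Q ∪ F)) := by
  by_cases hsep : (closedNbhd T (Q ∪ F))ᶜ.Nonempty
  · exact hF.2 _ ⟨hQ.1.1.1.mono subset_union_left, hsep⟩
  have huniv : #(Q ∪ F) + #(boundary T (Q ∪ F)) = Fintype.card A := by
    rw [← card_closedNbhd, ← card_univ,
      ← (compl_eq_empty_iff _).mp (not_nonempty_iff_eq_empty.mp hsep)]
  have hQ_le : #Q ≤ #(closedNbhd T F)ᶜ := hQ.2 _ (hF.compl_closedNbhd hT)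
  have hF_le := card_le_univ (closedNbhd T F)
  rw [card_compl, card_closedNbhd] at hQ_le
  rw [card_closedNbhd] at hF_le
  have := card_union_le Q F
  omega

lemma IsAtom.subset_of_inter_nonempty (hT : ∀ t ∈ T, -t ∈ T) {Q F : Finset A}
    (hQ : IsAtom T Q) (hF : IsFragment T F) (hQF : (Q ∩ F).Nonempty) : Q ⊆ F := by
  have hsep : IsSeparating T (Q ∩ F) :=
    ⟨hQF, hQ.1.1.2.mono (compl_subset_compl.mpr (closedNbhd_mono inter_subset_left))⟩
  have hfrag : IsFragment T (Q ∩ F) := by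
    refine ⟨hsep, fun D hD => le_trans ?_ (hF.2 D hD)⟩
    have := card_boundary_inter_add_card_boundary_union_le (T := T) Q F
    have := card_boundary_le_card_boundary_union hT hQ hF
    have := hQ.1.2 F hF.1
    omega
  exact inter_eq_left.mp (eq_of_subset_of_card_le inter_subset_left (hQ.2 _ hfrag))

lemma IsAtom.neg_add_mem (hT : ∀ t ∈ T, -t ∈ T) {Q : Finset A} (hQ : IsAtom T Q) (h0 : 0 ∈ Q)
    {a b : A} (ha : a ∈ Q) (hb : b ∈ Q) : -b + a ∈ Q := by
  have hsub : -b +ᵥ Q ⊆ Q := (hQ.vadd_finset (-b)).subset_of_inter_nonempty hT hQ.1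
    ⟨0, mem_inter.mpr ⟨mem_neg_vadd_finset_iff.mpr (by simpa using hb), h0⟩⟩
  exact hsub ((vadd_mem_vadd_finset_iff _).mpr ha)

lemma exists_addSubgroup_isAtom (hT : ∀ t ∈ T, -t ∈ T) (h : ∃ C, IsSeparating T C) :
    ∃ (H : AddSubgroup A) (Q : Finset A), (Q : Set A) = H ∧ IsAtom T Q := by
  obtain ⟨Q, hQ⟩ := exists_isAtom h
  obtain ⟨q, hq⟩ := hQ.1.1.1
  have h0 : (0 : A) ∈ -q +ᵥ Q := mem_neg_vadd_finset_iff.mpr (by simpa using hq)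
  have hQ' := hQ.vadd_finset (-q)
  exact ⟨AddSubgroup.ofSub (-q +ᵥ Q : Finset A) ⟨0, h0⟩ fun a ha b hb => by
    rw [add_comm]; exact hQ'.neg_add_mem hT h0 ha hb, _, rfl, hQ'⟩

theorem le_card_boundary_of_forall_addSubgroup (hT : ∀ t ∈ T, -t ∈ T) {m : ℕ}
    (hH : ∀ (H : AddSubgroup A) (Q : Finset A), (Q : Set A) = H → IsSeparating T Q →
      m ≤ #(boundary T Q))
    {C : Finset A} (hC : IsSeparating T C) : m ≤ #(boundary T C) := by
  obtain ⟨H, Q, hQH, hQ⟩ := exists_addSubgroup_isAtom hT ⟨C, hC⟩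
  exact (hH H Q hQH hQ.1.1).trans (hQ.1.2 C hC)

end Atom

section Graph

variable [Fintype A] {T : Finset A} {G : SimpleGraph A}

lemma isVertexCut_boundary (hadj : ∀ x y, G.Adj x y ↔ y - x ∈ T) {C : Finset A}
    (hC : IsSeparating T C) : G.IsVertexCut (boundary T C) := by
  obtain ⟨c, hc⟩ := hC.1
  obtain ⟨w, hw⟩ := hC.2
  rw [mem_compl, closedNbhd_eq_union_boundary, mem_union, not_or] at hw
  exact isVertexCut_iff.mpr <| Or.inr ⟨C, separatedBy_boundary hadj C,
    ⟨c, hc, fun h => (mem_sdiff.mp h).2 hc⟩, ⟨w, hw.1, hw.2⟩⟩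

lemma exists_isSeparating_of_isVertexCut (hadj : ∀ x y, G.Adj x y ↔ y - x ∈ T)
    {S : Set A} (hS : G.IsVertexCut S) (hS_univ : S ≠ Set.univ) :
    ∃ C : Finset A, IsSeparating T C ∧ (boundary T C : Set A) ⊆ S := by
  classical
  obtain ⟨C, hC, ⟨u, huC, -⟩, ⟨w, hwC, hwS⟩⟩ := (isVertexCut_iff.mp hS).resolve_left hS_univ
  have hbd : (boundary T C.toFinset : Set A) ⊆ S := by
    intro a ha
    obtain ⟨hmem, haC⟩ := mem_sdiff.mp ha
    obtain ⟨x, hx, t, ht, rfl⟩ := mem_add.mp hmem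
    have hxt : G.Adj x (x + t) := (hadj _ _).mpr (by rwa [add_sub_cancel_left])
    exact (hC x (Set.mem_toFinset.mp hx) _ hxt).resolve_left
      fun h => haC (Set.mem_toFinset.mpr h)
  refine ⟨C.toFinset, ⟨⟨u, Set.mem_toFinset.mpr huC⟩, ⟨w, ?_⟩⟩, hbd⟩
  rw [mem_compl, closedNbhd_eq_union_boundary, mem_union, not_or, Set.mem_toFinset]
  exact ⟨hwC, fun h => hwS (hbd h)⟩

theorem vConn_le_card_boundary (hadj : ∀ x y, G.Adj x y ↔ y - x ∈ T) {C : Finset A}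
    (hC : IsSeparating T C) : G.vConn ≤ #(boundary T C) :=
  Nat.sInf_le ⟨_, Set.ncard_coe_finset _, Or.inl (isVertexCut_boundary hadj hC)⟩

theorem le_vConn (hadj : ∀ x y, G.Adj x y ↔ y - x ∈ T) {m : ℕ} (hex : ∃ C, IsSeparating T C)
    (hm : ∀ C, IsSeparating T C → m ≤ #(boundary T C)) : m ≤ G.vConn := by
  obtain ⟨C₀, hC₀⟩ := hex
  have hlt := hC₀.card_boundary_lt
  have hm₀ := hm C₀ hC₀
  refine le_csInf ⟨_, Set.univ, Set.ncard_univ A, Or.inr (Nat.le_succ _)⟩ ?_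
  rintro n ⟨S, rfl, hS | hS⟩
  · by_cases hS_univ : S = Set.univ
    · rw [hS_univ, Set.ncard_univ, Nat.card_eq_fintype_card]
      omega
    obtain ⟨C, hC, hCS⟩ := exists_isSeparating_of_isVertexCut hadj hS hS_univ
    calc m ≤ #(boundary T C) := hm C hC
      _ = (boundary T C : Set A).ncard := (Set.ncard_coe_finset _).symm
      _ ≤ S.ncard := Set.ncard_le_ncard hCS
  · rw [Nat.card_eq_fintype_card] at hS
    omega

end Graph

end AddCayley

lemma Fin.one_ne_neg_one_of_three_le {n : ℕ} [NeZero n] (hn : 3 ≤ n) : (1 : Fin n) ≠ -1 := by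
  intro h
  have h2 : ((1 + 1 : Fin n) : ℕ) = 0 := by rw [congrArg (1 + ·) h, add_neg_cancel]; rfl
  rw [Fin.val_add, Fin.val_one', Nat.mod_eq_of_lt (by omega : 1 < n),
    Nat.mod_eq_of_lt (by omega)] at h2
  omega

open Fin.CommRing in
lemma Fin.exists_nsmul_two_eq_one {n : ℕ} [NeZero n] (hn : Odd n) :
    ∃ m : ℕ, m • (2 : Fin n) = 1 := by
  obtain ⟨c, hc⟩ := hn
  refine ⟨c + 1, ?_⟩
  have : (c + 1) • (2 : Fin n) = ((2 * c + 1 : ℕ) : Fin n) + 1 := by push_cast; ring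
  rw [this, ← hc, Fin.natCast_self, zero_add]

lemma SimpleGraph.cycleGraph_adj_iff_sub {n : ℕ} [NeZero n] (hn : 3 ≤ n) {u v : Fin n} :
    (cycleGraph n).Adj u v ↔ v - u = 1 ∨ v - u = -1 := by
  have hval : ∀ w : Fin n, (w : ℕ) = 1 ↔ w = 1 := fun w => by
    rw [Fin.ext_iff, Fin.val_one', Nat.mod_eq_of_lt (by omega)]
  rw [cycleGraph_adj', hval, hval, ← neg_sub v u, neg_eq_iff_eq_neg, or_comm]

section ProductOfCycles

open Fin.CommRing

variable {k : ℕ} (l : Fin k → ℕ) [∀ i, NeZero (l i)]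

def connectionSet : Finset ((∀ i, Fin (l i)) × Fin 2) :=
  Fintype.piFinset (fun _ => {1, -1}) ×ˢ {1}

variable {l}

lemma mem_connectionSet {x : (∀ i, Fin (l i)) × Fin 2} :
    x ∈ connectionSet l ↔ (∀ i, x.1 i = 1 ∨ x.1 i = -1) ∧ x.2 = 1 := by
  simp only [connectionSet, mem_product, Fintype.mem_piFinset, mem_insert, mem_singleton]

lemma card_connectionSet (hl : ∀ i, 3 ≤ l i) : #(connectionSet l) = 2 ^ k := by
  simp [connectionSet, Fintype.card_piFinset, card_pair (Fin.one_ne_neg_one_of_three_le (hl _))]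

lemma neg_mem_connectionSet {x : (∀ i, Fin (l i)) × Fin 2} (hx : x ∈ connectionSet l) :
    -x ∈ connectionSet l := by
  obtain ⟨hx₁, hx₂⟩ := mem_connectionSet.mp hx
  refine mem_connectionSet.mpr ⟨fun i => ?_, by rw [Prod.snd_neg, hx₂]; decide⟩
  rcases hx₁ i with h | h <;> simp [h]

lemma zero_notMem_connectionSet : (0 : (∀ i, Fin (l i)) × Fin 2) ∉ connectionSet l :=
  fun h => zero_ne_one (α := Fin 2) (mem_connectionSet.mp h).2

lemma fst_ne_zero_of_mem_connectionSet (i : Fin k) (hi : 2 ≤ l i)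
    {x : (∀ i, Fin (l i)) × Fin 2} (hx : x ∈ connectionSet l) : x.1 ≠ 0 := by
  intro h0
  have := Fin.nontrivial_iff_two_le.mpr hi
  rcases (mem_connectionSet.mp hx).1 i with h | h <;> rw [h0, Pi.zero_apply] at h
  · exact zero_ne_one h
  · exact one_ne_zero (zero_eq_neg.mp h)

lemma adj_iff_sub_mem_connectionSet (hk : 0 < k) (hl : ∀ i, 3 ≤ l i)
    (x y : (∀ i, Fin (l i)) × Fin 2) :
    ((piTensorProd fun i => cycleGraph (l i)).tensorProd (⊤ : SimpleGraph (Fin 2))).Adj x y ↔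
      y - x ∈ connectionSet l := by
  have hFin2 : ∀ a b : Fin 2, a ≠ b ↔ b - a = 1 := by decide
  have hcomp : ((∀ i, (cycleGraph (l i)).Adj (x.1 i) (y.1 i)) ∧ x.2 ≠ y.2) ↔
      y - x ∈ connectionSet l := by
    simp only [cycleGraph_adj_iff_sub (hl _), hFin2, mem_connectionSet, Prod.fst_sub,
      Prod.snd_sub, Pi.sub_apply]
  change (x.1 ≠ y.1 ∧ ∀ i, (cycleGraph (l i)).Adj (x.1 i) (y.1 i)) ∧ x.2 ≠ y.2 ↔ _
  refine ⟨fun h => hcomp.mp ⟨h.1.2, h.2⟩, fun h => ⟨⟨fun hxy => ?_, (hcomp.mpr h).1⟩,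
    (hcomp.mpr h).2⟩⟩
  exact fst_ne_zero_of_mem_connectionSet ⟨0, hk⟩ (by have := hl ⟨0, hk⟩; omega) h
    (by rw [Prod.fst_sub, hxy, sub_self])

lemma isSeparating_singleton_zero (hk : 0 < k) (hl : ∀ i, 3 ≤ l i) :
    AddCayley.IsSeparating (connectionSet l) {0} := by
  refine ⟨singleton_nonempty 0, (0, 1), ?_⟩
  simp only [AddCayley.closedNbhd, singleton_zero, zero_add, mem_compl, mem_union, mem_zero,
    not_or]
  exact ⟨fun h => one_ne_zero (α := Fin 2) (congrArg Prod.snd h), fun h =>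
    fst_ne_zero_of_mem_connectionSet ⟨0, hk⟩ (by have := hl ⟨0, hk⟩; omega) h rfl⟩

lemma boundary_singleton_zero :
    AddCayley.boundary (connectionSet l) {0} = connectionSet l := by
  rw [AddCayley.boundary, singleton_zero, zero_add, ← singleton_zero, sdiff_singleton_eq_erase,
    erase_eq_of_notMem zero_notMem_connectionSet]

/-- Since the `l i` are odd, `2` is a unit in each `Fin (l i)`, so the differences
`(Pi.single i 2, 0)` of elements of `connectionSet l` generate the first factor. -/
theorem closure_connectionSet (hodd : ∀ i, Odd (l i)) :
    AddSubgroup.closure (connectionSet l : Set ((∀ i, Fin (l i)) × Fin 2)) = ⊤ := by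
  set H := AddSubgroup.closure (connectionSet l : Set ((∀ i, Fin (l i)) × Fin 2))
  have hT : ∀ x ∈ connectionSet l, x ∈ H := fun x hx => AddSubgroup.subset_closure hx
  have hone : ((1 : ∀ i, Fin (l i)), (1 : Fin 2)) ∈ H :=
    hT _ (mem_connectionSet.mpr ⟨fun _ => Or.inl rfl, rfl⟩)
  have hsingle_two : ∀ i, (Pi.single i 2, 0) ∈ H := fun i => by
    have hflip : (Function.update (1 : ∀ i, Fin (l i)) i (-1), (1 : Fin 2)) ∈ H := by
      refine hT _ (mem_connectionSet.mpr ⟨fun j => ?_, rfl⟩)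
      by_cases hj : j = i
      · subst hj; simp
      · simp [hj]
    convert sub_mem hone hflip using 1
    ext j : 2
    · by_cases hj : j = i
      · subst hj; simp [one_add_one_eq_two]
      · simp [hj]
    · simp
  have hsingle_one : ∀ i, (Pi.single i 1, 0) ∈ H := fun i => by
    obtain ⟨m, hm⟩ := Fin.exists_nsmul_two_eq_one (hodd i)
    convert nsmul_mem (hsingle_two i) m using 1
    simp [← Pi.single_smul, hm]
  have hfst : ∀ f, (f, 0) ∈ H := by
    let K := H.comap (AddMonoidHom.inl _ (Fin 2))
    intro f
    show f ∈ K
    rw [← Finset.univ_sum_single f]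
    refine sum_mem fun i _ => ?_
    rw [← Fin.cast_val_eq_self (f i), ← nsmul_one, Pi.single_smul]
    exact nsmul_mem (show Pi.single i 1 ∈ K from hsingle_one i) _
  rw [AddSubgroup.eq_top_iff']
  rintro ⟨f, b⟩
  fin_cases b
  · exact hfst f
  · simpa using add_mem (hfst (f - 1)) hone

lemma le_card_boundary_connectionSet (hodd : ∀ i, Odd (l i)) (hl : ∀ i, 3 ≤ l i)
    {C : Finset ((∀ i, Fin (l i)) × Fin 2)} (hC : AddCayley.IsSeparating (connectionSet l) C) :
    2 ^ k ≤ #(AddCayley.boundary (connectionSet l) C) := by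
  refine AddCayley.le_card_boundary_of_forall_addSubgroup (fun _ => neg_mem_connectionSet)
    (fun H Q hQH hQ => ?_) hC
  by_cases hTQ : connectionSet l ⊆ Q
  · have hH : H = ⊤ := top_le_iff.mp <| closure_connectionSet hodd ▸
      (AddSubgroup.closure_le H).mpr (hQH ▸ coe_subset.mpr hTQ)
    obtain ⟨w, hw⟩ := hQ.2
    refine absurd (subset_union_left (s₂ := Q + connectionSet l) ?_) (mem_compl.mp hw)
    rw [← mem_coe, hQH, hH]
    trivial
  · rw [← card_connectionSet hl]
    exact AddCayley.card_le_card_boundary_of_addSubgroup (AddMonoidHom.snd _ _) one_ne_zero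
      (fun t ht => (mem_connectionSet.mp ht).2) hQH hTQ

end ProductOfCycles

/-- If H is the direct product of k ≥ 1 odd cycles, then κ(H × K₂) = 2^k. -/
theorem stmt_15 (k : ℕ) (hk : 1 ≤ k) (l : Fin k → ℕ)
    (hodd : ∀ i, Odd (l i)) (hl : ∀ i, 3 ≤ l i) :
    ((SimpleGraph.piTensorProd fun i => cycleGraph (l i)).tensorProd
      (⊤ : SimpleGraph (Fin 2))).vConn = 2 ^ k := by
  have : ∀ i, NeZero (l i) := fun i => ⟨by have := hl i; omega⟩
  have hadj := adj_iff_sub_mem_connectionSet hk hl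
  have hsep := isSeparating_singleton_zero hk hl
  apply le_antisymm
  · calc _ ≤ #(AddCayley.boundary (connectionSet l) {0}) :=
          AddCayley.vConn_le_card_boundary hadj hsep
      _ = 2 ^ k := by rw [boundary_singleton_zero, card_connectionSet hl]
  · exact AddCayley.le_vConn hadj ⟨_, hsep⟩ fun C hC => le_card_boundary_connectionSet hodd hl hC
end
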